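/- arXiv:math/0509321 — 6 statements merged into one kernel-verified Lean document; each statement's English description precedes it below -/
import Mathlib

section
/- Let g ∈ L²(ℝᵈ), b ∈ GL_d(ℝ), and let E(g,b) = {ω : g_b(ω) > 0} where g_b is the Grammian of g with respect to b. Define u_g(ω) = g(ω)/g_b(b⁻¹ω) for ω ∈ b·E(g,b) and u_g(ω) = 0 otherwise. Then (u_g)_b(ω) = 1 for almost every ω ∈ E(g,b). -/
open MeasureTheory Filter
open scoped Classical
noncomputable section

/-- The Grammian of `g` with respect to the matrix `b`. -/
def gram2 {d : ℕ} (b : Matrix (Fin d) (Fin d) ℝ) (g : (Fin d → ℝ) → ℂ) (ω : Fin d → ℝ) : ℝ :=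
  Real.sqrt (|b.det| * ∑' s : Fin d → ℤ, ‖g (b.mulVec (ω + fun i => (s i : ℝ)))‖ ^ 2)

/-- `E(g,b) = {ω : g_b(ω) > 0}`. -/
def Egb {d : ℕ} (b : Matrix (Fin d) (Fin d) ℝ) (g : (Fin d → ℝ) → ℂ) : Set (Fin d → ℝ) :=
  {ω | 0 < gram2 b g ω}

/-- `u_g(ω) = g(ω)/g_b(b⁻¹ω)` for `ω ∈ b·E(g,b)`, and `0` otherwise. -/
def ug {d : ℕ} (b : Matrix (Fin d) (Fin d) ℝ) (g : (Fin d → ℝ) → ℂ) (ω : Fin d → ℝ) : ℂ :=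
  if ω ∈ b.mulVec '' Egb b g then g ω / (gram2 b g (b⁻¹.mulVec ω) : ℝ) else 0

/-! On the coset `b(ω + ℤᵈ)` the function `u_g` is `g` divided by the constant `g_b(ω)`, because
the Grammian is `ℤᵈ`-periodic; dividing by a constant divides the Grammian by it, so
`(u_g)_b(ω) = g_b(ω) / g_b(ω) = 1` at every point of `E(g,b)`. -/

section Grammian

open Matrix

variable {d : ℕ} (b : Matrix (Fin d) (Fin d) ℝ) (g : (Fin d → ℝ) → ℂ) (ω : Fin d → ℝ)

lemma gram2_add_intCast (s : Fin d → ℤ) :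
    gram2 b g (ω + fun i => (s i : ℝ)) = gram2 b g ω := by
  unfold gram2
  congr 2
  rw [← (Equiv.addLeft (-s)).tsum_eq]
  refine tsum_congr fun t => ?_
  congr 4
  funext i
  simp only [Pi.add_apply, Equiv.coe_addLeft, Pi.neg_apply, Int.cast_add, Int.cast_neg]
  ring

lemma gram2_congr {g' : (Fin d → ℝ) → ℂ}
    (h : ∀ s : Fin d → ℤ,
      g (b *ᵥ (ω + fun i => (s i : ℝ))) = g' (b *ᵥ (ω + fun i => (s i : ℝ)))) :
    gram2 b g ω = gram2 b g' ω := by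
  simp only [gram2, h]

lemma gram2_div_const (c : ℝ) :
    gram2 b (fun x => g x / c) ω = gram2 b g ω / |c| := by
  have hnorm : ∀ x, ‖g x / (c : ℂ)‖ ^ 2 = ‖g x‖ ^ 2 / c ^ 2 := fun x => by
    rw [norm_div, Complex.norm_real, Real.norm_eq_abs, div_pow, sq_abs]
  simp only [gram2, hnorm, tsum_div_const, ← mul_div_assoc]
  rw [Real.sqrt_div' _ (sq_nonneg c), Real.sqrt_sq_eq_abs]

lemma det_ne_zero_of_mem_Egb (hω : ω ∈ Egb b g) : b.det ≠ 0 := by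
  intro hdet
  simp [Egb, gram2, hdet] at hω

lemma ug_mulVec_add_intCast (hω : ω ∈ Egb b g) (s : Fin d → ℤ) :
    ug b g (b *ᵥ (ω + fun i => (s i : ℝ))) =
      g (b *ᵥ (ω + fun i => (s i : ℝ))) / (gram2 b g ω : ℝ) := by
  have hmem : (ω + fun i => (s i : ℝ)) ∈ Egb b g := by
    simpa only [Egb, Set.mem_ofPred_eq, gram2_add_intCast] using hω
  have hdet : IsUnit b.det := (det_ne_zero_of_mem_Egb b g ω hω).isUnit
  rw [ug, if_pos ⟨_, hmem, rfl⟩, mulVec_mulVec, nonsing_inv_mul b hdet, one_mulVec,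
    gram2_add_intCast]

lemma gram2_ug_eq_one_of_mem_Egb (hω : ω ∈ Egb b g) : gram2 b (ug b g) ω = 1 := by
  have hpos : 0 < gram2 b g ω := hω
  rw [gram2_congr b _ ω (g' := fun x => g x / (gram2 b g ω : ℝ))
      (ug_mulVec_add_intCast b g ω hω), gram2_div_const, abs_of_pos hpos, div_self hpos.ne']

end Grammian

theorem gram_ug_eq_one_general {d : ℕ} (g : (Fin d → ℝ) → ℂ)
    (b : Matrix (Fin d) (Fin d) ℝ) :
    ∀ᵐ ω ∂(volume : Measure (Fin d → ℝ)), ω ∈ Egb b g → gram2 b (ug b g) ω = 1 :=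
  Eventually.of_forall fun ω => gram2_ug_eq_one_of_mem_Egb b g ω

/-- The Grammian of `u_g` equals 1 a.e. on `E(g,b)`. -/
theorem gram_ug_eq_one {d : ℕ} (g : (Fin d → ℝ) → ℂ)
    (hg : MemLp g 2 (volume : Measure (Fin d → ℝ)))
    (b : Matrix (Fin d) (Fin d) ℝ) (hb : IsUnit b) :
    ∀ᵐ ω ∂(volume : Measure (Fin d → ℝ)), ω ∈ Egb b g → gram2 b (ug b g) ω = 1 :=
  gram_ug_eq_one_general g b
end
end

section
/- For g, h ∈ L²(ℝᵈ) and b ∈ GL_d(ℝ), one has ‖g - h‖_{L²(ℝᵈ)} ≥ ‖g_b - h_b‖_{L²([0,1]ᵈ)}, where g_b and h_b are the Grammians of g and h with respect to b. -/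
/-!
Tiling `ℝᵈ` by the integer translates of `[0,1)ᵈ` and substituting `x = b y` gives
`∫_{[0,1]ᵈ} |det b| ∑ₛ |f(b(ω+s))|² dω = ‖f‖²_{L²(ℝᵈ)}`, so `f ↦ f_b` does not increase L² norms.
For `g, h ∈ L²` the series defining `g_b(ω)` and `h_b(ω)` therefore converge for almost every `ω`,
and there `g_b(ω)`, `h_b(ω)` are `ℓ²(ℤᵈ)`-norms of `s ↦ |det b|^{1/2} g(b(ω+s))` and of its
analogue for `h`; the reverse triangle inequality in `ℓ²` gives `|g_b - h_b| ≤ (g - h)_b` a.e.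
-/

open MeasureTheory Filter
noncomputable section

open Set Matrix
open scoped ENNReal

section UnitCubeTiling

variable {ι : Type*}

def intCube (s : ι → ℤ) : Set (ι → ℝ) :=
  pi univ fun i => Ico (s i : ℝ) (s i + 1)

lemma mem_intCube {s : ι → ℤ} {x : ι → ℝ} : x ∈ intCube s ↔ ∀ i, ⌊x i⌋ = s i := by
  simp only [intCube, mem_univ_pi, mem_Ico, Int.floor_eq_iff]

lemma measurableSet_intCube [Finite ι] (s : ι → ℤ) : MeasurableSet (intCube s) :=
  .univ_pi fun _ => measurableSet_Ico

lemma pairwise_disjoint_intCube :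
    Pairwise (Function.onFun Disjoint (intCube : (ι → ℤ) → Set (ι → ℝ))) := fun _ _ hst =>
  disjoint_left.2 fun _ hs ht =>
    hst (funext fun i => ((mem_intCube.1 hs) i).symm.trans ((mem_intCube.1 ht) i))

lemma iUnion_intCube : ⋃ s : ι → ℤ, intCube s = (univ : Set (ι → ℝ)) :=
  eq_univ_of_forall fun x => mem_iUnion.2 ⟨fun i => ⌊x i⌋, mem_intCube.2 fun _ => rfl⟩

lemma preimage_add_intCube (s : ι → ℤ) :
    (· + fun i => (s i : ℝ)) ⁻¹' intCube s = intCube 0 := by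
  ext x
  simp only [mem_preimage, mem_intCube, Pi.add_apply, Int.floor_add_intCast, Pi.zero_apply]
  exact forall_congr' fun i => by omega

lemma intCube_zero_ae_eq_Icc [Fintype ι] : intCube (0 : ι → ℤ) =ᵐ[volume] Icc 0 1 := by
  rw [volume_pi]
  simpa [intCube] using Measure.univ_pi_Ico_ae_eq_Icc (μ := fun _ : ι => volume)
    (f := (0 : ι → ℝ)) (g := 1)

theorem tsum_setLIntegral_Icc_comp_add_intCast [Fintype ι] (φ : (ι → ℝ) → ℝ≥0∞) :
    ∑' s : ι → ℤ, ∫⁻ ω in Icc 0 1, φ (ω + fun i => (s i : ℝ)) = ∫⁻ x, φ x := by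
  have hcube (s : ι → ℤ) :
      ∫⁻ ω in Icc 0 1, φ (ω + fun i => (s i : ℝ)) = ∫⁻ x in intCube s, φ x := by
    rw [← setLIntegral_congr intCube_zero_ae_eq_Icc, ← preimage_add_intCube s,
      (measurePreserving_add_right volume (fun i => (s i : ℝ))).setLIntegral_comp_preimage_emb
        (Homeomorph.addRight (fun i => (s i : ℝ))).measurableEmbedding]
  simp_rw [hcube]
  rw [← lintegral_iUnion measurableSet_intCube pairwise_disjoint_intCube, iUnion_intCube,
    Measure.restrict_univ]

end UnitCubeTiling

section LinearChangeOfVariables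

variable {ι : Type*} [Fintype ι] [DecidableEq ι] {b : Matrix ι ι ℝ}

lemma map_mulVec_volume (hb : b.det ≠ 0) :
    Measure.map (b *ᵥ ·) volume = ENNReal.ofReal |b.det|⁻¹ • (volume : Measure (ι → ℝ)) := by
  rw [← abs_inv]
  exact Real.map_matrix_volume_pi_eq_smul_volume_pi hb

lemma measurableEmbedding_mulVec (hb : b.det ≠ 0) :
    MeasurableEmbedding (b *ᵥ · : (ι → ℝ) → ι → ℝ) := by
  have hdet : LinearMap.det (toLin' b) ≠ 0 := by rwa [LinearMap.det_toLin']
  exact ((toLin' b).equivOfDetNeZero hdet).toContinuousLinearEquiv.toHomeomorph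
    |>.measurableEmbedding

lemma quasiMeasurePreserving_mulVec (hb : b.det ≠ 0) :
    Measure.QuasiMeasurePreserving (b *ᵥ · : (ι → ℝ) → ι → ℝ) :=
  ⟨(measurableEmbedding_mulVec hb).measurable, by
    rw [map_mulVec_volume hb]; exact Measure.smul_absolutelyContinuous⟩

theorem lintegral_comp_mulVec (hb : b.det ≠ 0) (φ : (ι → ℝ) → ℝ≥0∞) :
    ∫⁻ x, φ (b *ᵥ x) = ENNReal.ofReal |b.det|⁻¹ * ∫⁻ x, φ x := by
  rw [← (measurableEmbedding_mulVec hb).lintegral_map, map_mulVec_volume hb,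
    lintegral_smul_measure, smul_eq_mul]

end LinearChangeOfVariables

section Periodization

variable {ι : Type*} [Fintype ι] [DecidableEq ι] {b : Matrix ι ι ℝ}

lemma AEMeasurable.comp_mulVec_add {φ : (ι → ℝ) → ℝ≥0∞} (hφ : AEMeasurable φ) (hb : b.det ≠ 0)
    (v : ι → ℝ) : AEMeasurable fun ω => φ (b *ᵥ (ω + v)) :=
  hφ.comp_quasiMeasurePreserving <| (quasiMeasurePreserving_mulVec hb).comp
    (measurePreserving_add_right volume v).quasiMeasurePreserving

theorem setLIntegral_Icc_tsum_comp_mulVec {φ : (ι → ℝ) → ℝ≥0∞} (hφ : AEMeasurable φ)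
    (hb : b.det ≠ 0) :
    ∫⁻ ω in Icc 0 1, ∑' s : ι → ℤ, φ (b *ᵥ (ω + fun i => (s i : ℝ))) =
      ENNReal.ofReal |b.det|⁻¹ * ∫⁻ x, φ x := by
  rw [lintegral_tsum fun s => (hφ.comp_mulVec_add hb _).restrict,
    tsum_setLIntegral_Icc_comp_add_intCast (φ <| b *ᵥ ·), lintegral_comp_mulVec hb]

end Periodization

lemma ENNReal.ofReal_tsum_le {α : Type*} {f : α → ℝ} (hf : ∀ a, 0 ≤ f a) :
    ENNReal.ofReal (∑' a, f a) ≤ ∑' a, ENNReal.ofReal (f a) := by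
  by_cases hsum : Summable f
  · rw [ENNReal.ofReal_tsum_of_nonneg hf hsum]
  · simp [tsum_eq_zero_of_not_summable hsum]

lemma lp.norm_eq_sqrt_tsum_norm_sq {α E : Type*} [NormedAddCommGroup E]
    (x : lp (fun _ : α => E) 2) : ‖x‖ = √(∑' a, ‖x a‖ ^ 2) := by
  rw [lp.norm_eq_tsum_rpow (by norm_num), Real.sqrt_eq_rpow]
  norm_num

theorem abs_sqrt_tsum_norm_sq_sub_le {α E : Type*} [NormedAddCommGroup E] {u v : α → E}
    (hu : Summable fun a => ‖u a‖ ^ 2) (hv : Summable fun a => ‖v a‖ ^ 2) :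
    |√(∑' a, ‖u a‖ ^ 2) - √(∑' a, ‖v a‖ ^ 2)| ≤ √(∑' a, ‖u a - v a‖ ^ 2) := by
  let x : lp (fun _ : α => E) 2 := ⟨u, memℓp_gen (by simpa using hu)⟩
  let y : lp (fun _ : α => E) 2 := ⟨v, memℓp_gen (by simpa using hv)⟩
  have key := abs_norm_sub_norm_le x y
  rwa [lp.norm_eq_sqrt_tsum_norm_sq, lp.norm_eq_sqrt_tsum_norm_sq,
    lp.norm_eq_sqrt_tsum_norm_sq] at key

section Grammian

variable {d : ℕ} {b : Matrix (Fin d) (Fin d) ℝ}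

lemma enorm_gram2_sq_le (f : (Fin d → ℝ) → ℂ) (ω : Fin d → ℝ) :
    ‖gram2 b f ω‖ₑ ^ 2 ≤
      ENNReal.ofReal |b.det| * ∑' s : Fin d → ℤ, ‖f (b *ᵥ (ω + fun i => (s i : ℝ)))‖ₑ ^ 2 := by
  rw [gram2, Real.enorm_eq_ofReal (Real.sqrt_nonneg _), ← ENNReal.ofReal_pow (Real.sqrt_nonneg _),
    Real.sq_sqrt (by positivity), ENNReal.ofReal_mul (abs_nonneg _)]
  gcongr
  refine (ENNReal.ofReal_tsum_le fun _ => by positivity).trans_eq (tsum_congr fun s => ?_)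
  rw [ENNReal.ofReal_pow (norm_nonneg _), ofReal_norm]

lemma eLpNorm_two_le_of_lintegral_sq_le {α β E F : Type*} [MeasurableSpace α] [MeasurableSpace β]
    [NormedAddCommGroup E] [NormedAddCommGroup F] {μ : Measure α} {ν : Measure β} {u : α → E}
    {v : β → F} (h : ∫⁻ x, ‖u x‖ₑ ^ 2 ∂μ ≤ ∫⁻ y, ‖v y‖ₑ ^ 2 ∂ν) :
    eLpNorm u 2 μ ≤ eLpNorm v 2 ν := by
  simp only [eLpNorm_eq_lintegral_rpow_enorm_toReal two_ne_zero ENNReal.ofNat_ne_top,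
    ENNReal.toReal_ofNat, ENNReal.rpow_two]
  gcongr

theorem eLpNorm_gram2_le {f : (Fin d → ℝ) → ℂ} (hf : AEMeasurable f) (hb : b.det ≠ 0) :
    eLpNorm (gram2 b f) 2 (volume.restrict (Icc 0 1)) ≤ eLpNorm f 2 volume := by
  refine eLpNorm_two_le_of_lintegral_sq_le ?_
  have hf2 : AEMeasurable fun x => ‖f x‖ₑ ^ 2 := hf.enorm.pow_const 2
  calc ∫⁻ ω in Icc 0 1, ‖gram2 b f ω‖ₑ ^ 2
      ≤ ∫⁻ ω in Icc 0 1, ENNReal.ofReal |b.det| *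
          ∑' s : Fin d → ℤ, ‖f (b *ᵥ (ω + fun i => (s i : ℝ)))‖ₑ ^ 2 :=
        lintegral_mono fun ω => enorm_gram2_sq_le f ω
    _ = ENNReal.ofReal |b.det| * (ENNReal.ofReal |b.det|⁻¹ * ∫⁻ x, ‖f x‖ₑ ^ 2) := by
        rw [lintegral_const_mul' _ _ ENNReal.ofReal_ne_top,
          setLIntegral_Icc_tsum_comp_mulVec hf2 hb]
    _ = ∫⁻ x, ‖f x‖ₑ ^ 2 := by
        rw [← mul_assoc, ← ENNReal.ofReal_mul (abs_nonneg _),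
          mul_inv_cancel₀ (abs_ne_zero.2 hb), ENNReal.ofReal_one, one_mul]

theorem ae_summable_norm_sq_comp_mulVec {f : (Fin d → ℝ) → ℂ} (hf : MemLp f 2) (hb : b.det ≠ 0) :
    ∀ᵐ ω ∂volume.restrict (Icc 0 1),
      Summable fun s : Fin d → ℤ => ‖f (b *ᵥ (ω + fun i => (s i : ℝ)))‖ ^ 2 := by
  have hf2 : AEMeasurable fun x => ‖f x‖ₑ ^ 2 := hf.1.aemeasurable.enorm.pow_const 2
  have hfin : ∫⁻ x, ‖f x‖ₑ ^ 2 ≠ ∞ := by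
    simpa using (lintegral_rpow_enorm_lt_top_of_eLpNorm_lt_top two_ne_zero
      ENNReal.ofNat_ne_top hf.2).ne
  have hint : ∫⁻ ω in Icc 0 1, ∑' s : Fin d → ℤ,
      ‖f (b *ᵥ (ω + fun i => (s i : ℝ)))‖ₑ ^ 2 ≠ ∞ := by
    rw [setLIntegral_Icc_tsum_comp_mulVec hf2 hb]
    exact ENNReal.mul_ne_top ENNReal.ofReal_ne_top hfin
  have hmeas : AEMeasurable (fun ω => ∑' s : Fin d → ℤ,
      ‖f (b *ᵥ (ω + fun i => (s i : ℝ)))‖ₑ ^ 2) (volume.restrict (Icc 0 1)) := by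
    have := fun s : Fin d → ℤ =>
      (hf2.comp_mulVec_add hb fun i => (s i : ℝ)).restrict (s := Icc 0 1)
    fun_prop
  filter_upwards [ae_lt_top' hmeas hint] with ω hω
  simpa using ENNReal.summable_toReal hω.ne

lemma abs_gram2_sub_le {g h : (Fin d → ℝ) → ℂ} {ω : Fin d → ℝ}
    (hg : Summable fun s : Fin d → ℤ => ‖g (b *ᵥ (ω + fun i => (s i : ℝ)))‖ ^ 2)
    (hh : Summable fun s : Fin d → ℤ => ‖h (b *ᵥ (ω + fun i => (s i : ℝ)))‖ ^ 2) :
    |gram2 b g ω - gram2 b h ω| ≤ gram2 b (fun x => g x - h x) ω := by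
  simp only [gram2, Real.sqrt_mul (abs_nonneg _), ← mul_sub, abs_mul,
    abs_of_nonneg (Real.sqrt_nonneg |b.det|)]
  exact mul_le_mul_of_nonneg_left (abs_sqrt_tsum_norm_sq_sub_le hg hh) (Real.sqrt_nonneg _)

end Grammian

/-- `‖g - h‖_{L²(ℝᵈ)} ≥ ‖g_b - h_b‖_{L²([0,1]ᵈ)}`. -/
theorem gram_contraction {d : ℕ} (g h : (Fin d → ℝ) → ℂ)
    (hg : MemLp g 2 (volume : Measure (Fin d → ℝ)))
    (hh : MemLp h 2 (volume : Measure (Fin d → ℝ)))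
    (b : Matrix (Fin d) (Fin d) ℝ) (hb : IsUnit b) :
    eLpNorm (fun ω => gram2 b g ω - gram2 b h ω) 2
        (volume.restrict (Set.Icc (0 : Fin d → ℝ) 1)) ≤
      eLpNorm (fun x => g x - h x) 2 (volume : Measure (Fin d → ℝ)) := by
  have hdet : b.det ≠ 0 := ((Matrix.isUnit_iff_isUnit_det b).1 hb).ne_zero
  calc eLpNorm (fun ω => gram2 b g ω - gram2 b h ω) 2 (volume.restrict (Icc 0 1))
      ≤ eLpNorm (gram2 b fun x => g x - h x) 2 (volume.restrict (Icc 0 1)) := by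
        refine eLpNorm_mono_ae ?_
        filter_upwards [ae_summable_norm_sq_comp_mulVec hg hdet,
          ae_summable_norm_sq_comp_mulVec hh hdet] with ω hgω hhω
        exact (abs_gram2_sub_le hgω hhω).trans (Real.le_norm_self _)
    _ ≤ eLpNorm (fun x => g x - h x) 2 volume :=
        eLpNorm_gram2_le (hg.sub hh).aestronglyMeasurable.aemeasurable hdet
end
end

section
/- Let 1 ≤ p < ∞ and let I ⊂ ℝᵈ be a bounded d-dimensional interval (a product of bounded nondegenerate intervals). Define for b ∈ GL_d(ℝ) the p-Grammian (χ_I)_{b,p}(ω) = (|det b| ∑_{s ∈ ℤᵈ} χ_I(b(ω+s))^p)^{1/p}. Then (χ_I)_{b,p}(ω) → μ(I)^{1/p} for almost every ω ∈ [0,1]ᵈ as ‖b‖ → 0 over b ∈ GL_d(ℝ). -/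
open MeasureTheory Filter
noncomputable section

/-- The p-Grammian of `f` with respect to the matrix `b`. -/
def pgram {d : ℕ} (p : ℝ) (b : Matrix (Fin d) (Fin d) ℝ) (f : (Fin d → ℝ) → ℝ)
    (ω : Fin d → ℝ) : ℝ :=
  (|b.det| * ∑' s : Fin d → ℤ, ‖f (b.mulVec (ω + fun i => (s i : ℝ)))‖ ^ p) ^ (1 / p)

/-- The filter of invertible matrices whose operator norm tends to `0`. -/
def smallGL (d : ℕ) : Filter (Matrix (Fin d) (Fin d) ℝ) :=
  (Filter.comap (fun b : Matrix (Fin d) (Fin d) ℝ =>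
      ‖LinearMap.toContinuousLinearMap (Matrix.toLin' b)‖) (nhds 0)) ⊓
    Filter.principal {b | IsUnit b}

theorem Sfin {d : ℕ} (l u : Fin d → ℝ) (ω : Fin d → ℝ)
    (b : Matrix (Fin d) (Fin d) ℝ) (hb : IsUnit b) :
    {s : Fin d → ℤ | b.mulVec (ω + fun i => (s i : ℝ)) ∈
      Set.univ.pi fun i => Set.Ioo (l i) (u i)}.Finite := by
  have hdet : IsUnit b.det := (Matrix.isUnit_iff_isUnit_det b).mp hb
  set ν' : ℝ := ‖LinearMap.toContinuousLinearMap (Matrix.toLin' b⁻¹)‖ with hν'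
  set C : ℝ := ν' * (‖l‖ + ‖u‖) + ‖ω‖ with hC
  apply Set.Finite.subset (Set.Finite.pi fun i => Set.finite_Icc (-⌈C⌉) ⌈C⌉)
  rintro s hs
  simp only [Set.mem_setOf_eq, Set.mem_pi, Set.mem_univ, forall_true_left] at hs ⊢
  set y : Fin d → ℝ := b.mulVec (ω + fun i => (s i : ℝ)) with hy
  have hyb : ‖y‖ ≤ ‖l‖ + ‖u‖ := by
    rw [pi_norm_le_iff_of_nonneg (by positivity)]
    intro i
    have h1 := (hs i).1
    have h2 := (hs i).2
    have h3 : |l i| ≤ ‖l‖ := by simpa [Real.norm_eq_abs] using norm_le_pi_norm l i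
    have h4 : |u i| ≤ ‖u‖ := by simpa [Real.norm_eq_abs] using norm_le_pi_norm u i
    rw [Real.norm_eq_abs, abs_le]
    constructor
    · linarith [neg_abs_le (l i), norm_nonneg u]
    · linarith [le_abs_self (u i), norm_nonneg l]
  have hinv : (ω + fun i => (s i : ℝ)) = b⁻¹.mulVec y := by
    rw [hy, Matrix.mulVec_mulVec, Matrix.nonsing_inv_mul _ hdet, Matrix.one_mulVec]
  have hop : ‖b⁻¹.mulVec y‖ ≤ ν' * ‖y‖ := by
    simpa [Matrix.toLin'_apply] using
      (LinearMap.toContinuousLinearMap (Matrix.toLin' b⁻¹)).le_opNorm y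
  have hωs : ‖(ω + fun i => (s i : ℝ))‖ ≤ ν' * (‖l‖ + ‖u‖) := by
    rw [hinv]
    exact hop.trans (mul_le_mul_of_nonneg_left hyb (norm_nonneg _))
  have hsnorm : ‖fun i => (s i : ℝ)‖ ≤ C := by
    have : (fun i => (s i : ℝ)) = (ω + fun i => (s i : ℝ)) - ω := by abel
    rw [this, hC]
    exact (norm_sub_le _ _).trans (by gcongr)
  intro i
  have hsi : |(s i : ℝ)| ≤ C := by
    simpa [Real.norm_eq_abs] using (norm_le_pi_norm (fun i => (s i : ℝ)) i).trans hsnorm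
  have hsC : |(s i : ℝ)| ≤ (⌈C⌉ : ℝ) := hsi.trans (Int.le_ceil C)
  have : |s i| ≤ ⌈C⌉ := by exact_mod_cast (by push_cast; exact hsC : (|s i| : ℝ) ≤ (⌈C⌉ : ℝ))
  exact Set.mem_Icc.mpr (abs_le.mp this)

theorem tsum_card {d : ℕ} (p : ℝ) (hp : 1 ≤ p) (O : Set (Fin d → ℝ)) (ω : Fin d → ℝ)
    (b : Matrix (Fin d) (Fin d) ℝ)
    (hSfin : {s : Fin d → ℤ | b.mulVec (ω + fun i => (s i : ℝ)) ∈ O}.Finite) :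
    ∑' s : Fin d → ℤ, ‖(Set.indicator O (fun _ => (1:ℝ))) (b.mulVec (ω + fun i => (s i : ℝ)))‖ ^ p
      = hSfin.toFinset.card := by
  have hp0 : p ≠ 0 := by positivity
  have hterm : ∀ s : Fin d → ℤ,
      ‖(Set.indicator O (fun _ => (1:ℝ))) (b.mulVec (ω + fun i => (s i : ℝ)))‖ ^ p
        = Set.indicator {s : Fin d → ℤ | b.mulVec (ω + fun i => (s i : ℝ)) ∈ O}
            (fun _ => (1:ℝ)) s := by
    intro s
    by_cases hs : b.mulVec (ω + fun i => (s i : ℝ)) ∈ O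
    · rw [Set.indicator_of_mem hs, Set.indicator_of_mem (by exact hs)]
      simp [Real.one_rpow]
    · rw [Set.indicator_of_notMem hs, Set.indicator_of_notMem (by exact hs)]
      simp [Real.zero_rpow hp0]
  simp_rw [hterm]
  rw [tsum_eq_sum (s := hSfin.toFinset)
    (fun s hs => Set.indicator_of_notMem (by simpa using hs) _)]
  rw [Finset.sum_congr rfl fun s hs => Set.indicator_of_mem (hSfin.mem_toFinset.mp hs) _]
  simp

-- volume of the union of unit cubes
theorem vol_cubes {d : ℕ} (F : Finset (Fin d → ℤ)) :
    volume (⋃ s ∈ F, Set.univ.pi fun i => Set.Ico (s i : ℝ) ((s i : ℝ) + 1)) = F.card := by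
  rw [measure_biUnion_finset ?disj ?meas]
  · have h1 : ∀ s : Fin d → ℤ,
        volume (Set.univ.pi fun i => Set.Ico (s i : ℝ) ((s i : ℝ) + 1)) = 1 := by
      intro s
      rw [volume_pi_pi]
      simp [Real.volume_Ico]
    simp [h1]
  case disj =>
    intro s hs t ht hst
    rw [Function.onFun, Set.disjoint_left]
    rintro x hx hx'
    obtain ⟨i, hi⟩ := Function.ne_iff.mp hst
    simp only [Set.mem_pi, Set.mem_univ, forall_true_left, Set.mem_Ico] at hx hx'
    exact hi (((Int.floor_eq_iff).mpr (hx i)).symm.trans ((Int.floor_eq_iff).mpr (hx' i)))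
  case meas =>
    exact fun s _ => MeasurableSet.univ_pi fun i => measurableSet_Ico


theorem count_bounds {d : ℕ} (l u : Fin d → ℝ) (hlu : ∀ i, l i < u i) (ω : Fin d → ℝ)
    (b : Matrix (Fin d) (Fin d) ℝ) (hb : IsUnit b)
    (hSfin : {s : Fin d → ℤ | b.mulVec (ω + fun i => (s i : ℝ)) ∈
      Set.univ.pi fun i => Set.Ioo (l i) (u i)}.Finite)
    (hvolU : volume (⋃ s ∈ hSfin.toFinset,
        Set.univ.pi fun i => Set.Ico (s i : ℝ) ((s i : ℝ) + 1)) = hSfin.toFinset.card) :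
    (∏ i, max (u i - l i - 2 * ‖LinearMap.toContinuousLinearMap (Matrix.toLin' b)‖) 0)
      ≤ |b.det| * hSfin.toFinset.card ∧
    |b.det| * hSfin.toFinset.card
      ≤ ∏ i, (u i - l i + 2 * ‖LinearMap.toContinuousLinearMap (Matrix.toLin' b)‖) := by
  set η : ℝ := ‖LinearMap.toContinuousLinearMap (Matrix.toLin' b)‖ with hηdef
  have hη0 : 0 ≤ η := norm_nonneg _
  have hdet : b.det ≠ 0 := ((Matrix.isUnit_iff_isUnit_det b).mp hb).ne_zero
  have hdetpos : 0 < |b.det| := abs_pos.mpr hdet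
  have hdetlin : LinearMap.det (Matrix.toLin' b) ≠ 0 := by
    rwa [LinearMap.det_toLin']
  have hcoord : ∀ v : Fin d → ℝ, ‖v‖ ≤ 1 → ∀ i, |(b.mulVec v) i| ≤ η := by
    intro v hv i
    have h1 : |(b.mulVec v) i| ≤ ‖b.mulVec v‖ := by
      simpa [Real.norm_eq_abs] using norm_le_pi_norm (b.mulVec v) i
    have h2 : ‖b.mulVec v‖ ≤ η * ‖v‖ := by
      simpa [Matrix.toLin'_apply] using
        (LinearMap.toContinuousLinearMap (Matrix.toLin' b)).le_opNorm v
    nlinarith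
  set U : Set (Fin d → ℝ) := ⋃ s ∈ hSfin.toFinset,
    Set.univ.pi fun i => Set.Ico (s i : ℝ) ((s i : ℝ) + 1) with hUdef
  have hUtop : volume U ≠ ⊤ := by rw [hvolU]; exact ENNReal.natCast_ne_top _
  -- lower bound via shrunken box
  constructor
  · set L : Set (Fin d → ℝ) :=
      (fun x => ω + x) ⁻¹' (⇑(Matrix.toLin' b) ⁻¹'
        (Set.univ.pi fun i => Set.Ioo (l i + η) (u i - η))) with hLdef
    have hLU : L ⊆ U := by
      intro x hx
      simp only [hLdef, Set.mem_preimage, Matrix.toLin'_apply, Set.mem_pi, Set.mem_univ,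
        forall_true_left, Set.mem_Ioo] at hx
      set s : Fin d → ℤ := fun i => ⌊x i⌋ with hsdef
      have hnorm : ‖(fun i => (s i : ℝ)) - x‖ ≤ 1 := by
        rw [pi_norm_le_iff_of_nonneg zero_le_one]
        intro i
        rw [Real.norm_eq_abs, abs_le]
        constructor
        · simp only [Pi.sub_apply]
          linarith [Int.lt_floor_add_one (x i)]
        · simp only [Pi.sub_apply]
          linarith [Int.floor_le (x i)]
      have hsmem : s ∈ hSfin.toFinset := by
        rw [Set.Finite.mem_toFinset]
        have hdecomp : b.mulVec (ω + fun i => (s i : ℝ))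
            = b.mulVec (ω + x) + b.mulVec ((fun i => (s i : ℝ)) - x) := by
          rw [← Matrix.mulVec_add]
          congr 1
          abel_nf
        intro i _
        rw [hdecomp]
        have he := abs_le.mp (hcoord _ hnorm i)
        have h1 := (hx i).1
        have h2 := (hx i).2
        simp only [Pi.add_apply, Set.mem_Ioo]
        constructor <;> linarith
      exact Set.mem_biUnion hsmem (by
        intro i _
        exact Set.mem_Ico.mpr ⟨Int.floor_le (x i), Int.lt_floor_add_one (x i)⟩)
    have hvolL : volume L = ENNReal.ofReal |(b.det)⁻¹| *
        volume (Set.univ.pi fun i => Set.Ioo (l i + η) (u i - η)) := by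
      rw [hLdef, measure_preimage_add]
      rw [Measure.addHaar_preimage_linearMap volume hdetlin]
      rw [LinearMap.det_toLin']
    have key : (volume L).toReal ≤ (hSfin.toFinset.card : ℝ) := by
      have := ENNReal.toReal_mono hUtop (measure_mono hLU)
      rw [hvolU] at this; simpa using this
    have hLval : (volume L).toReal = |b.det|⁻¹ * ∏ i, max (u i - l i - 2 * η) 0 := by
      rw [hvolL, volume_pi_pi]
      simp only [Real.volume_Ioo]
      rw [ENNReal.toReal_mul, ENNReal.toReal_ofReal (by positivity), ENNReal.toReal_prod,
        abs_inv]
      congr 1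
      refine Finset.prod_congr rfl fun i _ => ?_
      rw [ENNReal.toReal_ofReal', show u i - η - (l i + η) = u i - l i - 2 * η by ring,
        max_comm]
    calc ∏ i, max (u i - l i - 2 * η) 0 = |b.det| * (volume L).toReal := by
          rw [hLval]; field_simp
      _ ≤ |b.det| * hSfin.toFinset.card := by
          exact mul_le_mul_of_nonneg_left key (le_of_lt hdetpos)
  · -- upper bound via enlarged box
    set L' : Set (Fin d → ℝ) :=
      (fun x => ω + x) ⁻¹' (⇑(Matrix.toLin' b) ⁻¹'
        (Set.univ.pi fun i => Set.Ioo (l i - η) (u i + η))) with hL'def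
    have hUL' : U ⊆ L' := by
      intro x hx
      simp only [hUdef, Set.mem_iUnion] at hx
      obtain ⟨s, hsF, hxs⟩ := hx
      have hs : b.mulVec (ω + fun i => (s i : ℝ)) ∈
          Set.univ.pi fun i => Set.Ioo (l i) (u i) := hSfin.mem_toFinset.mp hsF
      simp only [Set.mem_pi, Set.mem_univ, forall_true_left, Set.mem_Ioo] at hs
      simp only [Set.mem_pi, Set.mem_univ, forall_true_left, Set.mem_Ico] at hxs
      have hnorm : ‖x - (fun i => (s i : ℝ))‖ ≤ 1 := by
        rw [pi_norm_le_iff_of_nonneg zero_le_one]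
        intro i
        rw [Real.norm_eq_abs, abs_le]
        refine ⟨?_, ?_⟩ <;> simp only [Pi.sub_apply] <;> [linarith [(hxs i).1]; linarith [(hxs i).2]]
      simp only [hL'def, Set.mem_preimage, Matrix.toLin'_apply, Set.mem_pi, Set.mem_univ,
        forall_true_left, Set.mem_Ioo]
      have hdecomp : b.mulVec (ω + x)
          = b.mulVec (ω + fun i => (s i : ℝ)) + b.mulVec (x - fun i => (s i : ℝ)) := by
        rw [← Matrix.mulVec_add]
        congr 1
        abel_nf
      intro i
      rw [hdecomp]
      have he := abs_le.mp (hcoord _ hnorm i)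
      have h1 := (hs i).1
      have h2 := (hs i).2
      simp only [Pi.add_apply]
      constructor <;> linarith
    have hvolL' : volume L' = ENNReal.ofReal |(b.det)⁻¹| *
        volume (Set.univ.pi fun i => Set.Ioo (l i - η) (u i + η)) := by
      rw [hL'def, measure_preimage_add]
      rw [Measure.addHaar_preimage_linearMap volume hdetlin]
      rw [LinearMap.det_toLin']
    have hL'top : volume L' ≠ ⊤ := by
      rw [hvolL', volume_pi_pi]
      simp only [Real.volume_Ioo]
      exact ENNReal.mul_ne_top ENNReal.ofReal_ne_top (by
        exact (ENNReal.prod_lt_top (fun i _ => ENNReal.ofReal_lt_top)).ne)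
    have key : (hSfin.toFinset.card : ℝ) ≤ (volume L').toReal := by
      have := ENNReal.toReal_mono hL'top (measure_mono hUL')
      rw [hvolU] at this; simpa using this
    have hL'val : (volume L').toReal = |b.det|⁻¹ * ∏ i, (u i - l i + 2 * η) := by
      rw [hvolL', volume_pi_pi]
      simp only [Real.volume_Ioo]
      rw [ENNReal.toReal_mul, ENNReal.toReal_ofReal (by positivity), ENNReal.toReal_prod,
        abs_inv]
      congr 1
      refine Finset.prod_congr rfl fun i _ => ?_
      rw [ENNReal.toReal_ofReal (by linarith [hlu i])]
      ring
    calc |b.det| * (hSfin.toFinset.card : ℝ) ≤ |b.det| * (volume L').toReal :=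
          mul_le_mul_of_nonneg_left key (le_of_lt hdetpos)
      _ = ∏ i, (u i - l i + 2 * η) := by rw [hL'val]; field_simp

/-- For a bounded nondegenerate `d`-dimensional interval `I`, the p-Grammian of `χ_I`
converges a.e. on the unit cube to `μ(I)^{1/p}` as the operator norm of `b` tends to `0`. -/
theorem pgram_indicator_tendsto {d : ℕ} (p : ℝ) (hp : 1 ≤ p) (l u : Fin d → ℝ)
    (hlu : ∀ i, l i < u i) :
    ∀ᵐ ω ∂(volume.restrict (Set.Icc (0 : Fin d → ℝ) 1)),
      Tendsto
        (fun b : Matrix (Fin d) (Fin d) ℝ =>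
          pgram p b (Set.indicator (Set.univ.pi fun i => Set.Ioo (l i) (u i))
            (fun _ => (1 : ℝ))) ω)
        (smallGL d)
        (nhds ((volume (Set.univ.pi fun i => Set.Ioo (l i) (u i))).toReal ^ (1 / p))) := by
  refine Eventually.of_forall fun ω => ?_
  have hp0 : p ≠ 0 := by positivity
  set V : ℝ := ∏ i, (u i - l i) with hV
  have hVpos : 0 < V := Finset.prod_pos fun i _ => sub_pos.mpr (hlu i)
  have hvolO : (volume (Set.univ.pi fun i => Set.Ioo (l i) (u i))).toReal = V := by
    rw [volume_pi_pi]
    simp only [Real.volume_Ioo]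
    rw [ENNReal.toReal_prod]
    exact Finset.prod_congr rfl fun i _ => ENNReal.toReal_ofReal (by linarith [hlu i])
  have hνt : Tendsto (fun b : Matrix (Fin d) (Fin d) ℝ =>
      ‖LinearMap.toContinuousLinearMap (Matrix.toLin' b)‖) (smallGL d) (nhds 0) :=
    tendsto_comap.mono_left inf_le_left
  set g : Matrix (Fin d) (Fin d) ℝ → ℝ := fun b =>
    |b.det| * ∑' s : Fin d → ℤ,
      ‖(Set.indicator (Set.univ.pi fun i => Set.Ioo (l i) (u i)) (fun _ => (1:ℝ)))
        (b.mulVec (ω + fun i => (s i : ℝ)))‖ ^ p with hg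
  have hgt : Tendsto g (smallGL d) (nhds V) := by
    have hev : ∀ᶠ b in smallGL d, IsUnit b :=
      eventually_inf_principal.mpr (Eventually.of_forall fun b h => h)
    have hlow : Tendsto (fun b : Matrix (Fin d) (Fin d) ℝ =>
        ∏ i, max (u i - l i - 2 * ‖LinearMap.toContinuousLinearMap (Matrix.toLin' b)‖) 0)
        (smallGL d) (nhds V) := by
      have hc : Continuous fun t : ℝ => ∏ i : Fin d, max (u i - l i - 2 * t) 0 := by
        fun_prop
      have h2 := (hc.tendsto 0).comp hνt
      have h3 : (∏ i : Fin d, max (u i - l i - 2 * 0) 0) = V := by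
        rw [hV]
        exact Finset.prod_congr rfl fun i _ => by
          rw [mul_zero, sub_zero, max_eq_left (by linarith [hlu i])]
      rw [h3] at h2
      exact h2
    have hupp : Tendsto (fun b : Matrix (Fin d) (Fin d) ℝ =>
        ∏ i, (u i - l i + 2 * ‖LinearMap.toContinuousLinearMap (Matrix.toLin' b)‖))
        (smallGL d) (nhds V) := by
      have hc : Continuous fun t : ℝ => ∏ i : Fin d, (u i - l i + 2 * t) := by
        fun_prop
      have h2 := (hc.tendsto 0).comp hνt
      have h3 : (∏ i : Fin d, (u i - l i + 2 * 0)) = V := by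
        rw [hV]
        exact Finset.prod_congr rfl fun i _ => by ring
      rw [h3] at h2
      exact h2
    refine tendsto_of_tendsto_of_tendsto_of_le_of_le' hlow hupp
      (hev.mono fun b hb => ?_) (hev.mono fun b hb => ?_)
    · have hS := Sfin l u ω b hb
      have hgb : g b = |b.det| * hS.toFinset.card := by
        simp only [hg]
        rw [tsum_card p hp (Set.univ.pi fun i => Set.Ioo (l i) (u i)) ω b hS]
      show _ ≤ g b
      rw [hgb]
      exact (count_bounds l u hlu ω b hb hS (vol_cubes _)).1
    · have hS := Sfin l u ω b hb
      have hgb : g b = |b.det| * hS.toFinset.card := by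
        simp only [hg]
        rw [tsum_card p hp (Set.univ.pi fun i => Set.Ioo (l i) (u i)) ω b hS]
      show g b ≤ _
      rw [hgb]
      exact (count_bounds l u hlu ω b hb hS (vol_cubes _)).2
  have hcont : ContinuousAt (fun x : ℝ => x ^ (1 / p)) V :=
    Real.continuousAt_rpow_const V (1/p) (Or.inl hVpos.ne')
  have hfinal := hcont.tendsto.comp hgt
  rw [hvolO]
  exact hfinal
end
end

section
/- Let I ⊂ ℝᵈ be a bounded d-dimensional interval, Q = [0,1]ᵈ, and for b ∈ GL_d(ℝ) set N_o(b) = {s ∈ ℤᵈ : μ((bQ + bs) ∩ I) > 0 and μ((bQ + bs) ∩ Iᶜ) > 0}. Then |det b| · #N_o(b) → 0 as ‖b‖ → 0. -/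
open MeasureTheory Filter
noncomputable section

/-- The cube `bQ + bs`, where `Q = [0,1]ᵈ` and `s ∈ ℤᵈ`. -/
def tile {d : ℕ} (b : Matrix (Fin d) (Fin d) ℝ) (s : Fin d → ℤ) : Set (Fin d → ℝ) :=
  (fun x => b.mulVec (x + fun i => (s i : ℝ))) '' Set.Icc (0 : Fin d → ℝ) 1

/-- The set of `s ∈ ℤᵈ` whose cube `bQ + bs` meets both `I` and its complement
in positive measure. -/
def No {d : ℕ} (I : Set (Fin d → ℝ)) (b : Matrix (Fin d) (Fin d) ℝ) : Set (Fin d → ℤ) :=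
  {s | 0 < volume (tile b s ∩ I) ∧ 0 < volume (tile b s ∩ Iᶜ)}

/-!
Each cube `bQ + bs` is connected and, in the sup norm, has diameter at most `‖b‖`. So if it meets
both `I` and `Iᶜ`, it meets `∂I` and lies in the closed `‖b‖`-thickening of `∂I`. The cubes are
almost disjoint and have volume `|det b|`, hence `|det b| · #N_o(b)` is bounded by the volume of
that thickening, which tends to `μ(∂I) = 0` as `‖b‖ → 0` (the frontier of a convex set is null).
-/

open Metric Set Topology

theorem IsPreconnected.inter_frontier_nonempty {X : Type*} [TopologicalSpace X] {T I : Set X}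
    (hT : IsPreconnected T) (hTI : (T ∩ I).Nonempty) (hTI' : (T ∩ Iᶜ).Nonempty) :
    (T ∩ frontier I).Nonempty := by
  by_contra h
  have hcover : T ⊆ interior I ∪ (closure I)ᶜ := fun x hxT => by
    have hx : x ∉ frontier I := fun hxF => h ⟨x, hxT, hxF⟩
    rw [frontier, Set.mem_sdiff, not_and_not_right] at hx
    by_cases hc : x ∈ closure I
    exacts [Or.inl (hx hc), Or.inr hc]
  rcases hT.subset_or_subset isOpen_interior isClosed_closure.isOpen_compl
      (disjoint_compl_right_iff_subset.2 (interior_subset.trans subset_closure)) hcover with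
    hint | hext
  · obtain ⟨x, hxT, hxI⟩ := hTI'
    exact hxI (interior_subset (hint hxT))
  · obtain ⟨x, hxT, hxI⟩ := hTI
    exact hext hxT (subset_closure hxI)

section Tiles

variable {d : ℕ}

theorem tile_eq_image_Icc (b : Matrix (Fin d) (Fin d) ℝ) (s : Fin d → ℤ) :
    tile b s = Matrix.toLin' b '' Icc (fun i => (s i : ℝ)) (1 + fun i => (s i : ℝ)) := by
  rw [show Icc (fun i => (s i : ℝ)) (1 + fun i => (s i : ℝ)) =
      (· + fun i => (s i : ℝ)) '' Icc 0 1 by simp, image_image]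
  rfl

theorem isCompact_tile (b : Matrix (Fin d) (Fin d) ℝ) (s : Fin d → ℤ) : IsCompact (tile b s) := by
  rw [tile_eq_image_Icc]
  exact isCompact_Icc.image (LinearMap.continuous_of_finiteDimensional _)

theorem isPreconnected_tile (b : Matrix (Fin d) (Fin d) ℝ) (s : Fin d → ℤ) :
    IsPreconnected (tile b s) := by
  rw [tile_eq_image_Icc]
  exact (convex_Icc _ _).isPreconnected.image _
    (Matrix.toLin' b).continuous_of_finiteDimensional.continuousOn

theorem volume_tile (b : Matrix (Fin d) (Fin d) ℝ) (s : Fin d → ℤ) :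
    volume (tile b s) = ENNReal.ofReal |b.det| := by
  rw [tile_eq_image_Icc, Measure.addHaar_image_linearMap, LinearMap.det_toLin', Real.volume_Icc_pi]
  simp

theorem volume_Icc_intCast_inter_Icc_intCast_of_ne {s t : Fin d → ℤ} (hst : s ≠ t) :
    volume (Icc (fun i => (s i : ℝ)) (1 + fun i => (s i : ℝ)) ∩
      Icc (fun i => (t i : ℝ)) (1 + fun i => (t i : ℝ))) = 0 := by
  obtain ⟨i, hi⟩ := Function.ne_iff.1 hst
  rw [Icc_inter_Icc, Real.volume_Icc_pi]
  refine Finset.prod_eq_zero (Finset.mem_univ i) (ENNReal.ofReal_eq_zero.2 ?_)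
  simp only [Pi.inf_apply, Pi.sup_apply, Pi.add_apply, Pi.one_apply, sub_nonpos, min_le_iff,
    le_max_iff]
  norm_cast
  omega

theorem aedisjoint_tile {b : Matrix (Fin d) (Fin d) ℝ} (hb : IsUnit b) {s t : Fin d → ℤ}
    (hst : s ≠ t) : AEDisjoint volume (tile b s) (tile b t) := by
  have hinj : Function.Injective (Matrix.toLin' b) := Matrix.mulVec_injective_iff_isUnit.2 hb
  rw [AEDisjoint, tile_eq_image_Icc, tile_eq_image_Icc, ← image_inter hinj,
    Measure.addHaar_image_linearMap, volume_Icc_intCast_inter_Icc_intCast_of_ne hst, mul_zero]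

theorem dist_le_of_mem_tile {b : Matrix (Fin d) (Fin d) ℝ} {s : Fin d → ℤ} {y z : Fin d → ℝ}
    (hy : y ∈ tile b s) (hz : z ∈ tile b s) :
    dist y z ≤ ‖LinearMap.toContinuousLinearMap (Matrix.toLin' b)‖ := by
  obtain ⟨x, hx, rfl⟩ := hy
  obtain ⟨x', hx', rfl⟩ := hz
  set L := LinearMap.toContinuousLinearMap (Matrix.toLin' b)
  have hxx' : dist x x' ≤ 1 := (dist_pi_le_iff zero_le_one).2 fun i =>
    Real.dist_le_of_mem_Icc_01 ⟨hx.1 i, hx.2 i⟩ ⟨hx'.1 i, hx'.2 i⟩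
  calc dist (L (x + _)) (L (x' + _)) ≤ ‖L‖ * dist (x + _) (x' + _) := L.lipschitz.dist_le_mul _ _
    _ ≤ ‖L‖ * 1 := by rw [dist_add_right]; gcongr
    _ = ‖L‖ := mul_one _

theorem tile_subset_cthickening_frontier {I : Set (Fin d → ℝ)} {b : Matrix (Fin d) (Fin d) ℝ}
    {s : Fin d → ℤ} (hs : s ∈ No I b) :
    tile b s ⊆ cthickening ‖LinearMap.toContinuousLinearMap (Matrix.toLin' b)‖ (frontier I) := by
  obtain ⟨z, hzT, hzI⟩ := (isPreconnected_tile b s).inter_frontier_nonempty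
    (nonempty_of_measure_ne_zero hs.1.ne') (nonempty_of_measure_ne_zero hs.2.ne')
  exact fun y hy => mem_cthickening_of_dist_le y z _ _ hzI (dist_le_of_mem_tile hy hzT)

theorem ofReal_det_mul_ncard_le_volume {b : Matrix (Fin d) (Fin d) ℝ} (hb : IsUnit b)
    {S : Set (Fin d → ℤ)} {A : Set (Fin d → ℝ)} (hSA : ∀ s ∈ S, tile b s ⊆ A) :
    ENNReal.ofReal (|b.det| * S.ncard) ≤ volume A := by
  rcases S.finite_or_infinite with hS | hS
  · obtain ⟨F, rfl⟩ := hS.exists_finset_coe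
    calc ENNReal.ofReal (|b.det| * (F : Set (Fin d → ℤ)).ncard)
        = ∑ s ∈ F, volume (tile b s) := by
          simp [volume_tile, ENNReal.ofReal_mul, mul_comm]
      _ = volume (⋃ s ∈ F, tile b s) :=
          (measure_biUnion_finset₀ (fun s _ t _ hst => aedisjoint_tile hb hst)
            fun s _ => (isCompact_tile b s).isClosed.measurableSet.nullMeasurableSet).symm
      _ ≤ volume A := measure_mono (iUnion₂_subset hSA)
  · simp [hS.ncard]

end Tiles

theorem tendsto_det_mul_ncard_No_of_volume_frontier {d : ℕ} {I : Set (Fin d → ℝ)}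
    (hI : Bornology.IsBounded I) (hI' : volume (frontier I) = 0) :
    Tendsto (fun b : Matrix (Fin d) (Fin d) ℝ => |b.det| * ((No I b).ncard : ℝ))
      (smallGL d) (𝓝 0) := by
  have hnorm : Tendsto (fun b : Matrix (Fin d) (Fin d) ℝ =>
      ‖LinearMap.toContinuousLinearMap (Matrix.toLin' b)‖) (smallGL d) (𝓝 0) :=
    tendsto_comap.mono_left inf_le_left
  have hunit : ∀ᶠ b in smallGL d, IsUnit b := mem_inf_of_right (mem_principal_self _)
  have hthick : Tendsto (fun r => volume (cthickening r (frontier I))) (𝓝 0) (𝓝 0) := by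
    rw [← hI']
    refine tendsto_measure_cthickening_of_isClosed ⟨1, one_pos, ?_⟩ isClosed_frontier
    exact (hI.closure.subset frontier_subset_closure).cthickening.measure_lt_top.ne
  have hE : Tendsto (fun b : Matrix (Fin d) (Fin d) ℝ =>
      ENNReal.ofReal (|b.det| * (No I b).ncard)) (smallGL d) (𝓝 0) :=
    tendsto_of_tendsto_of_tendsto_of_le_of_le' tendsto_const_nhds (hthick.comp hnorm)
      (Eventually.of_forall fun _ => zero_le)
      (hunit.mono fun _ hb => ofReal_det_mul_ncard_le_volume hb
        fun _ => tile_subset_cthickening_frontier)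
  simpa [Function.comp_def, ENNReal.toReal_ofReal, abs_nonneg] using
    (ENNReal.tendsto_toReal ENNReal.zero_ne_top).comp hE

theorem det_mul_card_No_tendsto_zero_general {d : ℕ} (l u : Fin d → ℝ) :
    Tendsto
      (fun b : Matrix (Fin d) (Fin d) ℝ =>
        |b.det| * ((No (Set.univ.pi fun i => Set.Ioo (l i) (u i)) b).ncard : ℝ))
      (smallGL d) (nhds 0) :=
  tendsto_det_mul_ncard_No_of_volume_frontier
    (Bornology.IsBounded.pi fun i => isBounded_Ioo (l i) (u i))
    ((convex_pi fun i _ => convex_Ioo (l i) (u i)).addHaar_frontier volume)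

/-- For a bounded nondegenerate `d`-dimensional interval `I`,
`|det b| · #N_o(b) → 0` as the operator norm of the invertible `b` tends to `0`. -/
theorem det_mul_card_No_tendsto_zero {d : ℕ} (l u : Fin d → ℝ) (hlu : ∀ i, l i < u i) :
    Tendsto
      (fun b : Matrix (Fin d) (Fin d) ℝ =>
        |b.det| * ((No (Set.univ.pi fun i => Set.Ioo (l i) (u i)) b).ncard : ℝ))
      (smallGL d) (nhds 0) :=
  det_mul_card_No_tendsto_zero_general l u
end
end

section
/- Let a ∈ GL_d(ℝ) and let Ω ⊂ ℝᵈ be measurable with ⋃_{j∈ℤ} aʲΩ = ℝᵈ up to a null set and μ(aʲΩ ∩ aᵏΩ) = 0 for j ≠ k. If {g_k : k ∈ ℤ} is a Riesz basis for K_Ω = {f ∈ L²(ℝᵈ) : supp f ⊆ Ω} with bounds A, B, then {D_a^j g_k : j, k ∈ ℤ} is a Riesz basis for L²(ℝᵈ) with the same bounds, where (D_a g)(x) = |det a|^{1/2} g(ax). -/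
/-!
Each `D_a^j` is unitary on `L²(ℝᵈ)` and carries `K_Ω` into the functions supported in
`a⁻ʲΩ`. These sets tile `ℝᵈ` up to null sets, so the images `D_a^j K_Ω` are mutually
orthogonal, and Pythagoras over them transfers the Riesz bounds of `{g_k}` to `{D_a^j g_k}`.
Completeness: if `w` is orthogonal to every `D_a^j g_k`, then `D_a^{-j} w` is orthogonal to
`K_Ω`, hence vanishes on `Ω`; so `w` vanishes on every `a⁻ʲΩ`, hence almost everywhere.
-/

open MeasureTheory Filter
noncomputable section

/-- A family `f : ι → H` is a Riesz basis of a (closed) subset `K` of a Hilbert space `H`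
with bounds `A ≤ B`. -/
def IsRieszBasisOf {H : Type*} [NormedAddCommGroup H] [InnerProductSpace ℂ H]
    {ι : Type*} (K : Set H) (f : ι → H) (A B : ℝ) : Prop :=
  (∀ k, f k ∈ K) ∧ K ⊆ closure (Submodule.span ℂ (Set.range f) : Set H) ∧
    ∀ c : ι →₀ ℂ,
      A * ∑ k ∈ c.support, ‖c k‖ ^ 2 ≤ ‖∑ k ∈ c.support, c k • f k‖ ^ 2 ∧
        ‖∑ k ∈ c.support, c k • f k‖ ^ 2 ≤ B * ∑ k ∈ c.support, ‖c k‖ ^ 2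

/-- `K_Ω`: the subspace of `L²(ℝᵈ)` of functions supported in `Ω`. -/
def KOmega {d : ℕ} (Ω : Set (Fin d → ℝ)) :
    Set (Lp ℂ 2 (volume : Measure (Fin d → ℝ))) :=
  {f | ∀ᵐ x ∂(volume : Measure (Fin d → ℝ)), x ∉ Ω → (f : (Fin d → ℝ) → ℂ) x = 0}

/-- The `j`-th power of the unitary dilation: `(D_a^j g)(x) = |det aʲ|^{1/2} g(aʲx)`. -/
def dilPow {d : ℕ} (a : (Matrix (Fin d) (Fin d) ℝ)ˣ) (j : ℤ)
    (g : (Fin d → ℝ) → ℂ) (x : Fin d → ℝ) : ℂ :=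
  (|((a ^ j : (Matrix (Fin d) (Fin d) ℝ)ˣ) : Matrix (Fin d) (Fin d) ℝ).det| ^
      ((1 : ℝ) / 2) : ℝ) •
    g (((a ^ j : (Matrix (Fin d) (Fin d) ℝ)ˣ) : Matrix (Fin d) (Fin d) ℝ).mulVec x)

section RieszBounds

variable {E ι κ : Type*} [NormedAddCommGroup E] [InnerProductSpace ℂ E]

def HasRieszBounds (f : κ → E) (A B : ℝ) : Prop :=
  ∀ c : κ →₀ ℂ,
    A * ∑ k ∈ c.support, ‖c k‖ ^ 2 ≤ ‖∑ k ∈ c.support, c k • f k‖ ^ 2 ∧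
      ‖∑ k ∈ c.support, c k • f k‖ ^ 2 ≤ B * ∑ k ∈ c.support, ‖c k‖ ^ 2

theorem HasRieszBounds.prod_of_orthogonalFamily {S : Submodule ℂ E} {U : ι → E →ₗᵢ[ℂ] E}
    (hU : OrthogonalFamily ℂ (fun _ : ι => S) fun i => (U i).comp S.subtypeₗᵢ)
    {f : κ → E} (hfS : ∀ k, f k ∈ S) {A B : ℝ} (hf : HasRieszBounds f A B) :
    HasRieszBounds (fun p : ι × κ => U p.1 (f p.2)) A B := by
  intro c
  let v : ι → S := fun i =>
    ⟨∑ k ∈ (c.curry i).support, c.curry i k • f k, sum_mem fun k _ => S.smul_mem _ (hfS k)⟩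
  have hsum : ∑ p ∈ c.support, c p • U p.1 (f p.2) = ∑ i ∈ c.curry.support, U i (v i) := by
    simp only [v, map_sum, map_smul]
    exact (Finsupp.sum_curry_index c fun i k a => a • U i (f k)).symm
  have hcoef : ∑ p ∈ c.support, ‖c p‖ ^ 2 =
      ∑ i ∈ c.curry.support, ∑ k ∈ (c.curry i).support, ‖c.curry i k‖ ^ 2 :=
    (Finsupp.sum_curry_index c fun _ _ a => ‖a‖ ^ 2).symm
  have hnorm : ‖∑ p ∈ c.support, c p • U p.1 (f p.2)‖ ^ 2 =
      ∑ i ∈ c.curry.support, ‖∑ k ∈ (c.curry i).support, c.curry i k • f k‖ ^ 2 := by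
    rw [hsum]
    exact hU.norm_sum v _
  rw [hnorm, hcoef, Finset.mul_sum, Finset.mul_sum]
  exact ⟨Finset.sum_le_sum fun i _ => (hf (c.curry i)).1,
    Finset.sum_le_sum fun i _ => (hf (c.curry i)).2⟩

end RieszBounds

section Dilation

variable {d : ℕ}

local notation "GL" => (Matrix (Fin d) (Fin d) ℝ)ˣ

def dilation (M : GL) (g : (Fin d → ℝ) → ℂ) : (Fin d → ℝ) → ℂ :=
  (|M.val.det| ^ ((1 : ℝ) / 2) : ℝ) • (g ∘ M.val.mulVec)

theorem dilation_apply (M : GL) (g : (Fin d → ℝ) → ℂ) (x : Fin d → ℝ) :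
    dilation M g x = (|M.val.det| ^ ((1 : ℝ) / 2) : ℝ) • g (M.val.mulVec x) :=
  rfl

theorem dilPow_eq_dilation (a : GL) (j : ℤ) : dilPow a j = dilation (a ^ j) := rfl

theorem dilation_dilation (M N : GL) (g : (Fin d → ℝ) → ℂ) :
    dilation M (dilation N g) = dilation (N * M) g := by
  ext x
  simp only [dilation_apply, smul_smul, Units.val_mul, Matrix.mulVec_mulVec, Matrix.det_mul,
    abs_mul, Real.mul_rpow (abs_nonneg _) (abs_nonneg _), mul_comm]

theorem dilation_one (g : (Fin d → ℝ) → ℂ) : dilation (1 : GL) g = g := by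
  ext x
  simp [dilation_apply]

theorem map_mulVec_volume_s11 (M : GL) :
    Measure.map M.val.mulVec volume = ENNReal.ofReal |M.val.det|⁻¹ • volume := by
  rw [← abs_inv]
  exact Real.map_matrix_volume_pi_eq_smul_volume_pi ((Matrix.isUnits_det_units M).ne_zero)

theorem quasiMeasurePreserving_mulVec_s11 (M : GL) :
    Measure.QuasiMeasurePreserving M.val.mulVec volume volume :=
  Measure.LinearMap.quasiMeasurePreserving volume (Matrix.toLin' M.val)
    (by rw [LinearMap.det_toLin']; exact (Matrix.isUnits_det_units M).ne_zero)

theorem dilation_congr_ae (M : GL) {g h : (Fin d → ℝ) → ℂ} (hgh : g =ᵐ[volume] h) :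
    dilation M g =ᵐ[volume] dilation M h :=
  ((quasiMeasurePreserving_mulVec_s11 M).ae_eq_comp hgh).const_smul _

theorem MeasureTheory.AEStronglyMeasurable.dilation (M : GL) {g : (Fin d → ℝ) → ℂ}
    (hg : AEStronglyMeasurable g volume) : AEStronglyMeasurable (dilation M g) volume :=
  (hg.comp_quasiMeasurePreserving (quasiMeasurePreserving_mulVec_s11 M)).const_smul _

theorem eLpNorm_dilation (M : GL) {g : (Fin d → ℝ) → ℂ} (hg : AEStronglyMeasurable g volume) :
    eLpNorm (dilation M g) 2 volume = eLpNorm g 2 volume := by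
  have hcomp : eLpNorm (g ∘ M.val.mulVec) 2 volume =
      ENNReal.ofReal |M.val.det|⁻¹ ^ ((1 : ℝ) / 2) * eLpNorm g 2 volume := by
    rw [← eLpNorm_map_measure _ (quasiMeasurePreserving_mulVec_s11 M).aemeasurable,
      map_mulVec_volume_s11, eLpNorm_smul_measure_of_ne_top (by norm_num)]
    · simp [smul_eq_mul]
    · rw [map_mulVec_volume_s11]; exact hg.smul_measure _
  have hδ : 0 < |M.val.det| := abs_pos.2 ((Matrix.isUnits_det_units M).ne_zero)
  -- the Jacobian factor `|det M|⁻¹` of the substitution cancels the normalisation `|det M|^{1/2}`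
  have hconst : ‖(|M.val.det| ^ ((1 : ℝ) / 2) : ℝ)‖ₑ *
      ENNReal.ofReal |M.val.det|⁻¹ ^ ((1 : ℝ) / 2) = 1 := by
    rw [Real.enorm_eq_ofReal (by positivity), ENNReal.ofReal_rpow_of_nonneg (by positivity)
      (by norm_num), ← ENNReal.ofReal_mul (by positivity), ← Real.mul_rpow hδ.le (by positivity),
      mul_inv_cancel₀ hδ.ne', Real.one_rpow, ENNReal.ofReal_one]
  rw [dilation, eLpNorm_const_smul, hcomp, ← mul_assoc, hconst, one_mul]

theorem MeasureTheory.MemLp.dilation (M : GL) {g : (Fin d → ℝ) → ℂ} (hg : MemLp g 2 volume) :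
    MemLp (dilation M g) 2 volume :=
  ⟨hg.1.dilation M, by rw [eLpNorm_dilation M hg.1]; exact hg.2⟩

local notation "L²" => Lp ℂ 2 (volume : Measure (Fin d → ℝ))

def dilationL2 (M : GL) : L² →ₗᵢ[ℂ] L² where
  toFun f := ((Lp.memLp f).dilation M).toLp
  map_add' f g := by
    rw [← MemLp.toLp_add]
    refine MemLp.toLp_congr _ _ ?_
    filter_upwards [dilation_congr_ae M (Lp.coeFn_add f g)] with x hx
    simpa [dilation_apply, smul_add] using hx
  map_smul' c f := by
    rw [← MemLp.toLp_const_smul]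
    refine MemLp.toLp_congr _ _ ?_
    filter_upwards [dilation_congr_ae M (Lp.coeFn_smul c f)] with x hx
    rw [hx, Pi.smul_apply, dilation_apply, dilation_apply, Pi.smul_apply, smul_comm,
      RingHom.id_apply]
  norm_map' f := by
    change ‖((Lp.memLp f).dilation M).toLp‖ = ‖f‖
    rw [Lp.norm_toLp, eLpNorm_dilation M (Lp.aestronglyMeasurable f), Lp.norm_def]

theorem coeFn_dilationL2 (M : GL) (f : L²) : dilationL2 M f =ᵐ[volume] dilation M f :=
  ((Lp.memLp f).dilation M).coeFn_toLp

theorem dilationL2_toLp (M : GL) {g : (Fin d → ℝ) → ℂ} (hg : MemLp g 2 volume) :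
    dilationL2 M hg.toLp = (hg.dilation M).toLp :=
  MemLp.toLp_congr ((Lp.memLp _).dilation M) (hg.dilation M) (dilation_congr_ae M hg.coeFn_toLp)

theorem dilationL2_dilationL2 (M N : GL) (f : L²) :
    dilationL2 M (dilationL2 N f) = dilationL2 (N * M) f := by
  refine Lp.ext ?_
  filter_upwards [coeFn_dilationL2 M (dilationL2 N f), dilation_congr_ae M (coeFn_dilationL2 N f),
    coeFn_dilationL2 (N * M) f] with x h₁ h₂ h₃
  rw [h₁, h₂, h₃, dilation_dilation]

theorem dilationL2_dilationL2_inv (M : GL) (f : L²) : dilationL2 M (dilationL2 M⁻¹ f) = f := by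
  refine Lp.ext ?_
  rw [dilationL2_dilationL2, inv_mul_cancel]
  filter_upwards [coeFn_dilationL2 1 f] with x hx
  rw [hx, dilation_one]

def KOmegaSubmodule (Ω : Set (Fin d → ℝ)) : Submodule ℂ L² where
  carrier := KOmega Ω
  zero_mem' := by
    filter_upwards [Lp.coeFn_zero ℂ 2 (volume : Measure (Fin d → ℝ))] with x hx _
    exact hx
  add_mem' {f g} hf hg := by
    filter_upwards [hf, hg, Lp.coeFn_add f g] with x hfx hgx hx hxΩ
    rw [hx, Pi.add_apply, hfx hxΩ, hgx hxΩ, add_zero]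
  smul_mem' c f hf := by
    filter_upwards [hf, Lp.coeFn_smul c f] with x hfx hx hxΩ
    rw [hx, Pi.smul_apply, hfx hxΩ, smul_zero]

theorem dilationL2_mem_KOmega (M : GL) {Ω : Set (Fin d → ℝ)} {f : L²} (hf : f ∈ KOmega Ω) :
    dilationL2 M f ∈ KOmega (M.val.mulVec ⁻¹' Ω) := by
  filter_upwards [coeFn_dilationL2 M f, (quasiMeasurePreserving_mulVec_s11 M).tendsto_ae.eventually hf]
    with x hx hfx hxΩ
  rw [hx, dilation_apply, hfx hxΩ, smul_zero]

theorem inner_eq_zero_of_mem_KOmega {S T : Set (Fin d → ℝ)} (hST : volume (S ∩ T) = 0)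
    {f g : L²} (hf : f ∈ KOmega S) (hg : g ∈ KOmega T) : inner ℂ f g = 0 := by
  rw [L2.inner_def]
  refine integral_eq_zero_of_ae ?_
  filter_upwards [hf, hg, measure_eq_zero_iff_ae_notMem.mp hST] with x hfx hgx hx
  by_cases hxS : x ∈ S
  · rw [hgx fun hxT => hx ⟨hxS, hxT⟩, inner_zero_right, Pi.zero_apply]
  · rw [hfx hxS, inner_zero_left, Pi.zero_apply]

theorem mem_KOmega_compl_of_forall_inner_eq_zero {Ω : Set (Fin d → ℝ)} (hΩ : MeasurableSet Ω)
    {v : L²} (hv : ∀ u ∈ KOmega Ω, inner ℂ v u = 0) : v ∈ KOmega Ωᶜ := by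
  have hmem : MemLp (Ω.indicator v) 2 volume := (Lp.memLp v).indicator hΩ
  set u : L² := hmem.toLp
  have hu : u ∈ KOmega Ω := by
    filter_upwards [hmem.coeFn_toLp] with x hx hxΩ
    rw [hx, Set.indicator_of_notMem hxΩ]
  -- test `v` against its truncation `u = 1_Ω v ∈ K_Ω`: `‖u‖² = ⟪v, u⟫ = 0`
  have huu : inner ℂ u u = inner ℂ v u := by
    rw [L2.inner_def, L2.inner_def]
    refine integral_congr_ae ?_
    filter_upwards [hmem.coeFn_toLp] with x hx
    by_cases hxΩ : x ∈ Ω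
    · rw [hx, Set.indicator_of_mem hxΩ]
    · rw [hx, Set.indicator_of_notMem hxΩ, inner_zero_right, inner_zero_right]
  have hu0 : (u : (Fin d → ℝ) → ℂ) =ᵐ[volume] 0 := by
    rw [inner_self_eq_zero.mp (huu.trans (hv u hu))]
    exact Lp.coeFn_zero ℂ 2 volume
  filter_upwards [hmem.coeFn_toLp, hu0] with x hx h0 hxΩ
  rw [← Set.indicator_of_mem (not_not.mp hxΩ) v, ← hx, h0, Pi.zero_apply]

theorem eq_zero_of_forall_mem_KOmega_compl {ι : Type*} [Countable ι] {S : ι → Set (Fin d → ℝ)}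
    (hS : volume (⋃ i, S i)ᶜ = 0) {v : L²} (hv : ∀ i, v ∈ KOmega (S i)ᶜ) : v = 0 := by
  refine Lp.ext ?_
  filter_upwards [ae_all_iff.mpr hv, measure_eq_zero_iff_ae_notMem.mp hS,
    Lp.coeFn_zero ℂ 2 (volume : Measure (Fin d → ℝ))] with x hvx hx h0
  obtain ⟨i, hxi⟩ := Set.mem_iUnion.mp (not_not.mp hx)
  rw [hvx i (not_not.mpr hxi), h0, Pi.zero_apply]

theorem preimage_mulVec_eq_image_inv (M : GL) (S : Set (Fin d → ℝ)) :
    M.val.mulVec ⁻¹' S = (M⁻¹).val.mulVec '' S :=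
  (congrFun (Set.image_eq_preimage_of_inverse (f := (M⁻¹).val.mulVec) (g := M.val.mulVec)
    (fun x => by simp [Matrix.mulVec_mulVec]) (fun x => by simp [Matrix.mulVec_mulVec])) S).symm

theorem preimage_zpow_mulVec (a : GL) (j : ℤ) (S : Set (Fin d → ℝ)) :
    (a ^ j).val.mulVec ⁻¹' S = (a ^ (-j)).val.mulVec '' S := by
  rw [preimage_mulVec_eq_image_inv, _root_.zpow_neg]

theorem iUnion_preimage_zpow_mulVec (a : GL) (S : Set (Fin d → ℝ)) :
    ⋃ j : ℤ, (a ^ j).val.mulVec ⁻¹' S = ⋃ j : ℤ, (a ^ j).val.mulVec '' S := by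
  simp_rw [preimage_zpow_mulVec]
  exact neg_surjective.iUnion_comp fun j : ℤ => (a ^ j).val.mulVec '' S

theorem orthogonalFamily_dilationL2 {ι : Type*} {M : ι → GL} {Ω : Set (Fin d → ℝ)}
    (hdisj : Pairwise fun i j => volume ((M i).val.mulVec ⁻¹' Ω ∩ (M j).val.mulVec ⁻¹' Ω) = 0) :
    OrthogonalFamily ℂ (fun _ : ι => KOmegaSubmodule Ω)
      fun i => (dilationL2 (M i)).comp (KOmegaSubmodule Ω).subtypeₗᵢ :=
  fun _ _ hij f g => inner_eq_zero_of_mem_KOmega (hdisj hij) (dilationL2_mem_KOmega _ f.2)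
    (dilationL2_mem_KOmega _ g.2)

theorem dense_span_dilationL2 {ι κ : Type*} [Countable ι] {M : ι → GL} {Ω : Set (Fin d → ℝ)}
    (hΩ : MeasurableSet Ω) (hcover : volume (⋃ i, (M i).val.mulVec ⁻¹' Ω)ᶜ = 0)
    {f : κ → L²} (hf : KOmega Ω ⊆ closure (Submodule.span ℂ (Set.range f) : Set L²)) :
    Set.univ ⊆ closure (Submodule.span ℂ
      (Set.range fun p : ι × κ => dilationL2 (M p.1) (f p.2)) : Set L²) := by
  suffices hbot : (Submodule.span ℂ
      (Set.range fun p : ι × κ => dilationL2 (M p.1) (f p.2)))ᗮ = ⊥ by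
    intro x _
    change x ∈ (Submodule.span ℂ _).topologicalClosure
    rw [Submodule.topologicalClosure_eq_top_iff.mpr hbot]
    exact Submodule.mem_top
  refine (Submodule.eq_bot_iff _).mpr fun w hw => ?_
  have hpull : ∀ i, dilationL2 (M i)⁻¹ w ∈ KOmega Ωᶜ := by
    intro i
    have hspan : Submodule.span ℂ (Set.range f) ≤ (ℂ ∙ dilationL2 (M i)⁻¹ w)ᗮ := by
      refine Submodule.span_le.mpr (Set.range_subset_iff.mpr fun k => ?_)
      rw [SetLike.mem_coe, Submodule.mem_orthogonal_singleton_iff_inner_right,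
        ← (dilationL2 (M i)).inner_map_map, dilationL2_dilationL2_inv]
      exact Submodule.inner_left_of_mem_orthogonal
        (Submodule.subset_span (Set.mem_range_self (i, k))) hw
    refine mem_KOmega_compl_of_forall_inner_eq_zero hΩ fun u hu => ?_
    refine Submodule.mem_orthogonal_singleton_iff_inner_right.mp ?_
    exact closure_minimal hspan (Submodule.isClosed_orthogonal _) (hf hu)
  refine eq_zero_of_forall_mem_KOmega_compl hcover fun i => ?_
  rw [← dilationL2_dilationL2_inv (M i) w]
  exact dilationL2_mem_KOmega (M i) (hpull i)

end Dilation

theorem riesz_basis_dilations_general {d : ℕ} (a : (Matrix (Fin d) (Fin d) ℝ)ˣ)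
    (Ω : Set (Fin d → ℝ)) (hΩm : MeasurableSet Ω)
    (hcover : volume ((⋃ j : ℤ,
      ((a ^ j : (Matrix (Fin d) (Fin d) ℝ)ˣ) : Matrix (Fin d) (Fin d) ℝ).mulVec '' Ω)ᶜ) = 0)
    (hdisj : ∀ j k : ℤ, j ≠ k →
      volume ((((a ^ j : (Matrix (Fin d) (Fin d) ℝ)ˣ) : Matrix (Fin d) (Fin d) ℝ).mulVec '' Ω) ∩
        (((a ^ k : (Matrix (Fin d) (Fin d) ℝ)ˣ) : Matrix (Fin d) (Fin d) ℝ).mulVec '' Ω)) = 0)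
    (g : ℤ → (Fin d → ℝ) → ℂ)
    (hg : ∀ k, MemLp (g k) 2 (volume : Measure (Fin d → ℝ)))
    (hDg : ∀ jk : ℤ × ℤ, MemLp (dilPow a jk.1 (g jk.2)) 2 (volume : Measure (Fin d → ℝ)))
    (A B : ℝ)
    (hRB : IsRieszBasisOf (KOmega Ω) (fun k : ℤ => MemLp.toLp _ (hg k)) A B) :
    IsRieszBasisOf (Set.univ : Set (Lp ℂ 2 (volume : Measure (Fin d → ℝ))))
      (fun jk : ℤ × ℤ => MemLp.toLp _ (hDg jk)) A B := by
  have hcover' : volume (⋃ j : ℤ, (a ^ j).val.mulVec ⁻¹' Ω)ᶜ = 0 := by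
    rwa [iUnion_preimage_zpow_mulVec]
  have hdisj' : Pairwise fun j k : ℤ =>
      volume ((a ^ j).val.mulVec ⁻¹' Ω ∩ (a ^ k).val.mulVec ⁻¹' Ω) = 0 := fun j k hjk => by
    simpa only [preimage_zpow_mulVec] using hdisj _ _ (neg_injective.ne hjk)
  have hfamily : (fun jk : ℤ × ℤ => MemLp.toLp _ (hDg jk)) =
      fun jk => dilationL2 (a ^ jk.1) (MemLp.toLp _ (hg jk.2)) := by
    ext1 jk
    rw [dilationL2_toLp]
    exact MemLp.toLp_congr _ _ (by rw [dilPow_eq_dilation])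
  rw [hfamily]
  refine ⟨fun _ => trivial, ?_, ?_⟩
  · exact dense_span_dilationL2 (M := fun j => a ^ j) (f := fun k => MemLp.toLp _ (hg k))
      hΩm hcover' hRB.2.1
  · exact HasRieszBounds.prod_of_orthogonalFamily (U := fun j => dilationL2 (a ^ j))
      (f := fun k => MemLp.toLp _ (hg k)) (orthogonalFamily_dilationL2 hdisj') hRB.1 hRB.2.2

/-- If `{aʲΩ}_{j∈ℤ}` tiles `ℝᵈ` (a.e. covering with null pairwise overlaps) and
`{g_k}` is a Riesz basis of `K_Ω` with bounds `A, B`, then `{D_a^j g_k}` is a Riesz basis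
of `L²(ℝᵈ)` with the same bounds. -/
theorem riesz_basis_dilations {d : ℕ} (a : (Matrix (Fin d) (Fin d) ℝ)ˣ)
    (Ω : Set (Fin d → ℝ)) (hΩm : MeasurableSet Ω)
    (hcover : volume ((⋃ j : ℤ,
      ((a ^ j : (Matrix (Fin d) (Fin d) ℝ)ˣ) : Matrix (Fin d) (Fin d) ℝ).mulVec '' Ω)ᶜ) = 0)
    (hdisj : ∀ j k : ℤ, j ≠ k →
      volume ((((a ^ j : (Matrix (Fin d) (Fin d) ℝ)ˣ) : Matrix (Fin d) (Fin d) ℝ).mulVec '' Ω) ∩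
        (((a ^ k : (Matrix (Fin d) (Fin d) ℝ)ˣ) : Matrix (Fin d) (Fin d) ℝ).mulVec '' Ω)) = 0)
    (g : ℤ → (Fin d → ℝ) → ℂ)
    (hg : ∀ k, MemLp (g k) 2 (volume : Measure (Fin d → ℝ)))
    (hDg : ∀ jk : ℤ × ℤ, MemLp (dilPow a jk.1 (g jk.2)) 2 (volume : Measure (Fin d → ℝ)))
    (A B : ℝ) (hA : 0 < A) (hAB : A ≤ B)
    (hRB : IsRieszBasisOf (KOmega Ω) (fun k : ℤ => MemLp.toLp _ (hg k)) A B) :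
    IsRieszBasisOf (Set.univ : Set (Lp ℂ 2 (volume : Measure (Fin d → ℝ))))
      (fun jk : ℤ × ℤ => MemLp.toLp _ (hDg jk)) A B :=
  riesz_basis_dilations_general a Ω hΩm hcover hdisj g hg hDg A B hRB
end
end

section
/- With the setup of the wavelet-set construction (0 < r < R/3, A_0 = B_∞(0, r/2), a = (R/r)I, T̃ the piecewise translation by R·ξ_j on the j-th quadrant, A_n = (a⁻¹∘T̃)ⁿ(A_0)): if x ∈ A_n (n ≥ 1) then (rR/(R−r))·(1 − (r/R)ⁿ) ≤ ‖x‖_∞ ≤ (rR/(R−r))·(1 − (r/R)ⁿ·(r+R)/(2R)). -/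
/-!
Since `T̃` pushes every coordinate away from the origin by exactly `R`, the sup norm obeys
`‖T̃ x‖ = R + ‖x‖`, so one step `x ↦ a⁻¹ T̃ x` acts on norms as the affine map
`t ↦ r + (r/R) t`. Norms on `A_0` range over `[0, r/2]` and the map is monotone, so the norms on
`A_n` lie between its `n`-th iterates of `0` and `r/2`, which are `c + (r/R)ⁿ (s - c)` for the
fixed point `c = rR/(R - r)` and starting value `s`.
-/

open MeasureTheory Filter
noncomputable section

/-- The piecewise translation `T̃(x) = x + R·ξ_j` for `x` in the `j`-th quadrant. -/
def quadShift {d : ℕ} (R : ℝ) (x : Fin d → ℝ) : Fin d → ℝ :=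
  x + fun i => R * (if 0 < x i then 1 else -1)

/-- `A_0 = B_∞(0, r/2)` and `A_{n+1} = (a⁻¹ ∘ T̃)(A_n)` with `a = (R/r)·I`. -/
def Aset (d : ℕ) (r R : ℝ) : ℕ → Set (Fin d → ℝ)
  | 0 => Metric.closedBall 0 (r / 2)
  | n + 1 => (fun x => (r / R) • quadShift R x) '' Aset d r R n

lemma iterate_affine_eq_of_isFixedPt {a q c : ℝ} (hc : Function.IsFixedPt (fun t => a + q * t) c)
    (n : ℕ) (s : ℝ) :
    (fun t => a + q * t)^[n] s = c + q ^ n * (s - c) := by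
  induction n with
  | zero => simp
  | succ n ih =>
    rw [Function.iterate_succ_apply', ih]
    linear_combination hc.eq

lemma norm_quadShift_apply {d : ℕ} {R : ℝ} (hR : 0 ≤ R) (x : Fin d → ℝ) (i : Fin d) :
    ‖quadShift R x i‖ = R + ‖x i‖ := by
  simp only [quadShift, Pi.add_apply, Real.norm_eq_abs]
  split_ifs with h
  · rw [mul_one, abs_of_pos (by linarith), abs_of_pos h]
    ring
  · rw [abs_of_nonpos (by linarith), abs_of_nonpos (not_lt.mp h)]
    ring

lemma norm_quadShift {d : ℕ} (hd : 0 < d) {R : ℝ} (hR : 0 ≤ R) (x : Fin d → ℝ) :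
    ‖quadShift R x‖ = R + ‖x‖ := by
  have : Nonempty (Fin d) := Fin.pos_iff_nonempty.mp hd
  obtain ⟨i, hi⟩ := (IsGreatest.pi_norm x).1
  apply le_antisymm
  · refine (pi_norm_le_iff_of_nonneg (by positivity)).mpr fun j => ?_
    rw [norm_quadShift_apply hR]
    exact add_le_add_right (norm_le_pi_norm x j) R
  · calc R + ‖x‖ = ‖quadShift R x i‖ := by rw [norm_quadShift_apply hR, ← hi]
      _ ≤ ‖quadShift R x‖ := norm_le_pi_norm _ i

lemma norm_mem_Icc_of_mem_Aset {d : ℕ} (hd : 0 < d) {r R : ℝ} (hr : 0 ≤ r) (hR : 0 < R)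
    {n : ℕ} {x : Fin d → ℝ} (hx : x ∈ Aset d r R n) :
    ‖x‖ ∈ Set.Icc ((fun t => r + r / R * t)^[n] 0) ((fun t => r + r / R * t)^[n] (r / 2)) := by
  have hstep : Monotone fun t : ℝ => r + r / R * t := fun _ _ hst =>
    add_le_add_right (mul_le_mul_of_nonneg_left hst (div_nonneg hr hR.le)) r
  induction n generalizing x with
  | zero =>
    simp only [Aset, Metric.mem_closedBall, dist_zero_right] at hx
    exact ⟨norm_nonneg x, hx⟩
  | succ n ih =>
    obtain ⟨y, hy, rfl⟩ := hx
    have hnorm : ‖(r / R) • quadShift R y‖ = r + r / R * ‖y‖ := by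
      rw [norm_smul, norm_quadShift hd hR.le, Real.norm_of_nonneg (div_nonneg hr hR.le),
        mul_add, div_mul_cancel₀ r hR.ne']
    rw [hnorm, Function.iterate_succ_apply', Function.iterate_succ_apply']
    exact ⟨hstep (ih hy).1, hstep (ih hy).2⟩

theorem Aset_norm_bounds_general {d : ℕ} (hd : 0 < d) (r R : ℝ) (hr : 0 < r) (hrR : 3 * r < R)
    (n : ℕ) (x : Fin d → ℝ) (hx : x ∈ Aset d r R n) :
    r * R / (R - r) * (1 - (r / R) ^ n) ≤ ‖x‖ ∧
      ‖x‖ ≤ r * R / (R - r) * (1 - (r / R) ^ n * ((r + R) / (2 * R))) := by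
  have hR : 0 < R := by linarith
  have hRr : R - r ≠ 0 := by linarith
  have hfix : Function.IsFixedPt (fun t => r + r / R * t) (r * R / (R - r)) := by
    dsimp only [Function.IsFixedPt]
    field_simp
    ring
  obtain ⟨hlo, hhi⟩ := norm_mem_Icc_of_mem_Aset hd hr.le hR hx
  rw [iterate_affine_eq_of_isFixedPt hfix] at hlo hhi
  refine ⟨le_of_eq_of_le ?_ hlo, le_of_le_of_eq hhi ?_⟩
  · ring
  · field_simp
    ring

/-- Norm bounds for points of `A_n`, `n ≥ 1`: if `x ∈ A_n` then
`(rR/(R−r))(1 − (r/R)ⁿ) ≤ ‖x‖_∞ ≤ (rR/(R−r))(1 − (r/R)ⁿ(r+R)/(2R))`.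
(The norm on `Fin d → ℝ` is the sup norm.) -/
theorem Aset_norm_bounds {d : ℕ} (hd : 0 < d) (r R : ℝ) (hr : 0 < r) (hrR : 3 * r < R)
    (n : ℕ) (hn : 1 ≤ n) (x : Fin d → ℝ) (hx : x ∈ Aset d r R n) :
    r * R / (R - r) * (1 - (r / R) ^ n) ≤ ‖x‖ ∧
      ‖x‖ ≤ r * R / (R - r) * (1 - (r / R) ^ n * ((r + R) / (2 * R))) :=
  Aset_norm_bounds_general hd r R hr hrR n x hx
end
end
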